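/- arXiv:1510.02443 — 2 statements merged into one kernel-verified Lean document; each statement's English description precedes it below -/
import Mathlib

section
/- The three-qubit W state |W⟩ = (1/√3)(|100⟩ + |010⟩ + |001⟩) ∈ (ℂ^2)^{⊗3} cannot be written as a linear combination of two product vectors; i.e., its tensor rank is at least 3. -/
open scoped BigOperators

/-- Standard basis vector `|i⟩` of `ℂ^2`. -/
noncomputable def eVec (i : Fin 2) : Fin 2 → ℂ := fun j => if j = i then 1 else 0

/-- Product vector `a ⊗ b ⊗ c` in `(ℂ^2)^{⊗3}`. -/
noncomputable def tens2 (a b c : Fin 2 → ℂ) : Fin 2 × Fin 2 × Fin 2 → ℂ :=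
  fun p => a p.1 * b p.2.1 * c p.2.2

/-- `|W⟩ = (1/√3)(|100⟩ + |010⟩ + |001⟩)`. -/
noncomputable def WVec : Fin 2 × Fin 2 × Fin 2 → ℂ :=
  ((Real.sqrt 3 : ℂ))⁻¹ •
    (tens2 (eVec 1) (eVec 0) (eVec 0) + tens2 (eVec 0) (eVec 1) (eVec 0) +
      tens2 (eVec 0) (eVec 0) (eVec 1))

/-- Determinant of the `x₁ = 0` slice: `p P K = -s²`. -/
lemma aux1 (p P r u R U v w V W s : ℂ)
    (h1 : 0 = p*r*v + P*R*V) (h2 : s = p*r*w + P*R*W) (h3 : s = p*u*v + P*U*V)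
    (h5 : 0 = p*u*w + P*U*W) :
    p * P * ((r*U - u*R)*(v*W - w*V)) = -s^2 := by
  linear_combination (p*u*w + P*U*W) * h1.symm - (p*u*v + P*U*V) * h2.symm - s * h3.symm

/-- Mixed determinant of the two slices: `(pQ + qP) K = 0`. -/
lemma aux2 (p q P Q r u R U v w V W s : ℂ)
    (h1 : 0 = p*r*v + P*R*V) (h2 : s = p*r*w + P*R*W) (h4 : s = q*r*v + Q*R*V)
    (h5 : 0 = p*u*w + P*U*W) (h6 : 0 = q*r*w + Q*R*W) (h7 : 0 = q*u*v + Q*U*V)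
    (h8 : 0 = q*u*w + Q*U*W) :
    (p * Q + q * P) * ((r*U - u*R)*(v*W - w*V)) = 0 := by
  linear_combination (q*u*w + Q*U*W) * h1.symm + (p*u*w + P*U*W) * h4.symm
    - (q*u*v + Q*U*V) * h2.symm - s * h7.symm + s * h5.symm
    - (p*u*v + P*U*V) * h6.symm

/-- Determinant of the `x₁ = 1` slice: `q Q K = 0`. -/
lemma aux3 (q Q r u R U v w V W s : ℂ)
    (h4 : s = q*r*v + Q*R*V) (h6 : 0 = q*r*w + Q*R*W) (h7 : 0 = q*u*v + Q*U*V)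
    (h8 : 0 = q*u*w + Q*U*W) :
    q * Q * ((r*U - u*R)*(v*W - w*V)) = 0 := by
  linear_combination (q*u*w + Q*U*W) * h4.symm + s * h8.symm - (q*u*v + Q*U*V) * h6.symm

/-- The three-qubit W state is not a sum of two product vectors: its tensor
rank is at least 3. -/
theorem stmt7 :
    ¬ ∃ a₁ b₁ c₁ a₂ b₂ c₂ : Fin 2 → ℂ,
      WVec = tens2 a₁ b₁ c₁ + tens2 a₂ b₂ c₂ := by
  rintro ⟨a₁, b₁, c₁, a₂, b₂, c₂, h⟩
  have hs : ((Real.sqrt 3 : ℂ))⁻¹ ≠ 0 := by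
    simp only [ne_eq, inv_eq_zero, Complex.ofReal_eq_zero]
    exact Real.sqrt_ne_zero'.mpr (by norm_num)
  have H := fun p => congrFun h p
  have h1 := H (0,0,0)
  have h2 := H (0,0,1)
  have h3 := H (0,1,0)
  have h4 := H (1,0,0)
  have h5 := H (0,1,1)
  have h6 := H (1,0,1)
  have h7 := H (1,1,0)
  have h8 := H (1,1,1)
  simp only [WVec, tens2, eVec, Pi.add_apply, Pi.smul_apply, smul_eq_mul,
    show ((0:Fin 2) = 1) = False by simp, show ((1:Fin 2) = 0) = False by simp,
    if_true, if_false, eq_self_iff_true, ite_true, ite_false,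
    mul_one, mul_zero, one_mul, zero_mul, add_zero, zero_add] at h1 h2 h3 h4 h5 h6 h7 h8
  set s : ℂ := ((Real.sqrt 3 : ℂ))⁻¹ with hs_def
  have C1 := aux1 (a₁ 0) (a₂ 0) (b₁ 0) (b₁ 1) (b₂ 0) (b₂ 1) (c₁ 0) (c₁ 1) (c₂ 0) (c₂ 1) s
    h1 h2 h3 h5
  have C2 := aux2 (a₁ 0) (a₁ 1) (a₂ 0) (a₂ 1) (b₁ 0) (b₁ 1) (b₂ 0) (b₂ 1) (c₁ 0) (c₁ 1)
    (c₂ 0) (c₂ 1) s h1 h2 h4 h5 h6 h7 h8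
  have C3 := aux3 (a₁ 1) (a₂ 1) (b₁ 0) (b₁ 1) (b₂ 0) (b₂ 1) (c₁ 0) (c₁ 1) (c₂ 0) (c₂ 1) s
    h4 h6 h7 h8
  set K : ℂ := (b₁ 0 * b₂ 1 - b₁ 1 * b₂ 0) * (c₁ 0 * c₂ 1 - c₁ 1 * c₂ 0) with hK_def
  have hprod : a₁ 0 * a₂ 0 * K ≠ 0 := by
    rw [C1]
    exact neg_ne_zero.mpr (pow_ne_zero 2 hs)
  have hK : K ≠ 0 := fun hk => hprod (by rw [hk, mul_zero])
  have ha10 : a₁ 0 ≠ 0 := fun hz => hprod (by rw [hz]; ring)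
  have ha20 : a₂ 0 ≠ 0 := fun hz => hprod (by rw [hz]; ring)
  have hqQ : a₁ 1 * a₂ 1 = 0 := by
    rcases mul_eq_zero.mp C3 with h' | h'
    · exact h'
    · exact absurd h' hK
  have hsum : a₁ 0 * a₂ 1 + a₁ 1 * a₂ 0 = 0 := by
    rcases mul_eq_zero.mp C2 with h' | h'
    · exact h'
    · exact absurd h' hK
  have hboth : a₁ 1 = 0 ∧ a₂ 1 = 0 := by
    rcases mul_eq_zero.mp hqQ with hq | hQ
    · refine ⟨hq, ?_⟩
      have hz : a₁ 0 * a₂ 1 = 0 := by linear_combination hsum - a₂ 0 * hq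
      exact (mul_eq_zero.mp hz).resolve_left ha10
    · refine ⟨?_, hQ⟩
      have hz : a₁ 1 * a₂ 0 = 0 := by linear_combination hsum - a₁ 0 * hQ
      exact (mul_eq_zero.mp hz).resolve_right ha20
  exact hs (by linear_combination h4 + b₁ 0 * c₁ 0 * hboth.1 + b₂ 0 * c₂ 0 * hboth.2)
end

section
/- Every vector φ ∈ (ℂ^2)^{⊗3} has tensor rank at most 3; i.e., φ can be written as a sum of at most 3 product vectors a ⊗ b ⊗ c. -/
open scoped BigOperators

/-!
Split `φ = e₀ ⊗ M₀ + e₁ ⊗ M₁` into its two slices, `2 × 2` matrices. For every `α`,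
`φ = (1, α) ⊗ M₀ + e₁ ⊗ (M₁ - α M₀)`, and `(1, α) ⊗ M₀` is a sum of two product vectors (one per
row of `M₀`). If `M₀` is invertible, `α` can be taken to be an eigenvalue of `M₀⁻¹ M₁`, which exists
over `ℂ`; then `M₁ - α M₀` is singular, hence of rank one, so `e₁ ⊗ (M₁ - α M₀)` is a single product
vector. If `M₀` is singular, the same argument works with the roles of the two slices exchanged
and `α = 0`.
-/

open Matrix

theorem Matrix.exists_det_sub_smul_eq_zero {K n : Type*} [Field K] [IsAlgClosed K] [Fintype n]
    [DecidableEq n] [Nonempty n] (A B : Matrix n n K) (hB : B.det ≠ 0) :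
    ∃ α : K, (A - α • B).det = 0 := by
  obtain ⟨α, hα⟩ := IsAlgClosed.exists_root (B⁻¹ * A).charpoly (by simp)
  refine ⟨α, ?_⟩
  have hBinv : B * B⁻¹ = 1 := mul_nonsing_inv B (isUnit_iff_ne_zero.mpr hB)
  have factor : A - α • B = -(B * (scalar n α - B⁻¹ * A)) := by
    rw [mul_sub, ← Matrix.mul_assoc, hBinv, Matrix.one_mul, scalar_apply, ← smul_one_eq_diagonal,
      Matrix.mul_smul, Matrix.mul_one]
    abel
  rw [factor, det_neg, det_mul, ← eval_charpoly, hα.eq_zero, mul_zero, mul_zero]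

theorem Matrix.exists_eq_vecMulVec_of_det_eq_zero {K : Type*} [Field K]
    (M : Matrix (Fin 2) (Fin 2) K) (h : M.det = 0) : ∃ u v, M = vecMulVec u v := by
  rw [det_fin_two] at h
  by_cases h00 : M 0 0 = 0
  · by_cases h01 : M 0 1 = 0
    · refine ⟨![0, 1], M 1, ?_⟩
      ext i j; fin_cases i <;> fin_cases j <;> simp [vecMulVec_apply, h00, h01]
    · have h10 : M 1 0 = 0 := by simpa [h00, h01] using h
      refine ⟨![1, M 1 1 / M 0 1], M 0, ?_⟩
      ext i j; fin_cases i <;> fin_cases j <;> simp [vecMulVec_apply, h00, h10, h01]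
  · refine ⟨![1, M 1 0 / M 0 0], M 0, ?_⟩
    ext i j; fin_cases i <;> fin_cases j <;> simp [vecMulVec_apply, h00]
    field_simp
    linear_combination h

def slice (φ : Fin 2 × Fin 2 × Fin 2 → ℂ) (i : Fin 2) : Matrix (Fin 2) (Fin 2) ℂ :=
  Matrix.of fun j k => φ (i, j, k)

/-- `x ⊗ M`. -/
def vecTensMat (x : Fin 2 → ℂ) (M : Matrix (Fin 2) (Fin 2) ℂ) : Fin 2 × Fin 2 × Fin 2 → ℂ :=
  fun p => x p.1 * M p.2.1 p.2.2

theorem tens2_eq_vecTensMat (a b c : Fin 2 → ℂ) :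
    tens2 a b c = vecTensMat a (vecMulVec b c) := by
  ext p
  simp only [tens2, vecTensMat, vecMulVec_apply, mul_assoc]

theorem vecTensMat_eq_tens2_add_tens2 (x : Fin 2 → ℂ) (M : Matrix (Fin 2) (Fin 2) ℂ) :
    vecTensMat x M = tens2 x ![1, 0] (M 0) + tens2 x ![0, 1] (M 1) := by
  ext ⟨i, j, k⟩
  fin_cases j <;> simp [tens2, vecTensMat]

theorem eq_vecTensMat_add_vecTensMat_slice (φ : Fin 2 × Fin 2 × Fin 2 → ℂ) (α : ℂ) :
    φ = vecTensMat ![1, α] (slice φ 0) + vecTensMat ![0, 1] (slice φ 1 - α • slice φ 0) := by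
  ext ⟨i, j, k⟩
  fin_cases i <;> simp [vecTensMat, slice]

theorem exists_eq_vecTensMat_add_vecTensMat_det_eq_zero (φ : Fin 2 × Fin 2 × Fin 2 → ℂ) :
    ∃ x y M N, N.det = 0 ∧ φ = vecTensMat x M + vecTensMat y N := by
  by_cases h : (slice φ 0).det = 0
  · refine ⟨![0, 1], ![1, 0], slice φ 1, slice φ 0, h, ?_⟩
    simpa [add_comm] using eq_vecTensMat_add_vecTensMat_slice φ 0
  · obtain ⟨α, hα⟩ := (slice φ 1).exists_det_sub_smul_eq_zero (slice φ 0) h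
    exact ⟨_, _, _, _, hα, eq_vecTensMat_add_vecTensMat_slice φ α⟩

/-- Every three-qubit vector is a sum of at most 3 product vectors. -/
theorem stmt10 (φ : Fin 2 × Fin 2 × Fin 2 → ℂ) :
    ∃ a b c : Fin 3 → (Fin 2 → ℂ),
      φ = ∑ i : Fin 3, tens2 (a i) (b i) (c i) := by
  obtain ⟨x, y, M, N, hN, hφ⟩ := exists_eq_vecTensMat_add_vecTensMat_det_eq_zero φ
  obtain ⟨u, v, rfl⟩ := N.exists_eq_vecMulVec_of_det_eq_zero hN
  refine ⟨![x, x, y], ![![1, 0], ![0, 1], u], ![M 0, M 1, v], ?_⟩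
  rw [hφ, vecTensMat_eq_tens2_add_tens2, ← tens2_eq_vecTensMat, Fin.sum_univ_three]
  rfl
end
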